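/- arXiv:2304.14989 — 3 statements merged into one kernel-verified Lean document; each statement's English description precedes it below -/
import Mathlib

section
/- Let 0 < ε < μ < 1 and define h(μ, ε) = ln( (1-μ+ε)μ / ((1-μ)(μ-ε)) ). Then h(μ, ε) ≥ ε(1+ε) / (μ(1-μ+ε)). -/
/-- Lower bound on `h(μ, ε) = ln((1-μ+ε)μ / ((1-μ)(μ-ε)))` for `0 < ε < μ < 1`. -/
theorem h_lower_bound (μ ε : ℝ) (hε : 0 < ε) (hεμ : ε < μ) (hμ : μ < 1) :
    Real.log ((1 - μ + ε) * μ / ((1 - μ) * (μ - ε)))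
      ≥ ε * (1 + ε) / (μ * (1 - μ + ε)) := by
  have h1 : (0:ℝ) < 1 - μ := by linarith
  have h2 : (0:ℝ) < μ - ε := by linarith
  have h3 : (0:ℝ) < 1 - μ + ε := by linarith
  have h4 : (0:ℝ) < μ := by linarith
  have key : ∀ a c : ℝ, 0 < a → 0 < c →
      Real.log a - Real.log c ≥ 1 - c / a := by
    intro a c ha hc
    have h := Real.log_le_sub_one_of_pos (div_pos hc ha)
    rw [Real.log_div (ne_of_gt hc) (ne_of_gt ha)] at h
    linarith
  have hA := key (1 - μ + ε) (1 - μ) h3 h1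
  have hB := key μ (μ - ε) h4 h2
  rw [Real.log_div (by positivity) (by positivity),
    Real.log_mul (ne_of_gt h3) (ne_of_gt h4),
    Real.log_mul (ne_of_gt h1) (ne_of_gt h2)]
  have heq : ε * (1 + ε) / (μ * (1 - μ + ε))
      = (1 - (1 - μ) / (1 - μ + ε)) + (1 - (μ - ε) / μ) := by
    field_simp
    ring
  rw [heq]
  linarith
end

section
/- Let 0 < μ ≤ 1 and 0 < ε ≤ μ/2, and define h(μ, ε) = ln( (1-μ+ε)μ / ((1-μ)(μ-ε)) ) and H = 1/((μ-ε)(1-μ+ε) h(μ,ε)²). Then H ≤ 2μ(1-μ)/ε² + 2/ε. -/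
/-- With `h(μ,ε) = ln((1-μ+ε)μ/((1-μ)(μ-ε)))` and
`H = 1/((μ-ε)(1-μ+ε) h(μ,ε)²)`, for `0 < μ ≤ 1` and `0 < ε ≤ μ/2`,
`H ≤ 2μ(1-μ)/ε² + 2/ε`. -/
theorem H_upper_bound (μ ε : ℝ) (hμ0 : 0 < μ) (hμ1 : μ ≤ 1)
    (hε : 0 < ε) (hεμ : ε ≤ μ / 2) :
    1 / ((μ - ε) * (1 - μ + ε) *
          (Real.log ((1 - μ + ε) * μ / ((1 - μ) * (μ - ε)))) ^ 2)
      ≤ 2 * (μ * (1 - μ)) / ε ^ 2 + 2 / ε := by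
  rcases eq_or_lt_of_le hμ1 with h1 | h1
  · subst h1
    simp
    positivity
  · have ha : 0 < μ - ε := by linarith
    have hb : 0 < 1 - μ + ε := by linarith
    have h1μ : 0 < 1 - μ := by linarith
    set x := (1 - μ + ε) * μ / ((1 - μ) * (μ - ε)) with hx
    have hxpos : 0 < x := by positivity
    have hxinv : x⁻¹ = (1 - μ) * (μ - ε) / ((1 - μ + ε) * μ) := by
      rw [hx]
      field_simp
    have hlog : ε / (μ * (1 - μ + ε)) ≤ Real.log x := by
      have h := Real.log_le_sub_one_of_pos (x := x⁻¹) (by positivity)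
      rw [Real.log_inv, hxinv] at h
      have key : ε / (μ * (1 - μ + ε))
          = 1 - (1 - μ) * (μ - ε) / ((1 - μ + ε) * μ) := by
        field_simp
        ring
      rw [key]; linarith
    have hlpos : 0 < Real.log x :=
      lt_of_lt_of_le (by positivity) hlog
    have hsq : (ε / (μ * (1 - μ + ε))) ^ 2 ≤ (Real.log x) ^ 2 :=
      pow_le_pow_left₀ (by positivity) hlog 2
    have step1 : 1 / ((μ - ε) * (1 - μ + ε) * (Real.log x) ^ 2)
        ≤ 1 / ((μ - ε) * (1 - μ + ε) * (ε / (μ * (1 - μ + ε))) ^ 2) := by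
      apply one_div_le_one_div_of_le (by positivity)
      exact mul_le_mul_of_nonneg_left hsq (by positivity)
    refine step1.trans ?_
    rw [div_le_iff₀ (by positivity)]
    have expand : (μ - ε) * (1 - μ + ε) * (ε / (μ * (1 - μ + ε))) ^ 2
        = (μ - ε) * ε ^ 2 / (μ ^ 2 * (1 - μ + ε)) := by
      field_simp
    rw [expand]
    have h2 : (2 * (μ * (1 - μ)) / ε ^ 2 + 2 / ε)
        * ((μ - ε) * ε ^ 2 / (μ ^ 2 * (1 - μ + ε)))
        = (μ - ε) * (2 * μ * (1 - μ) + 2 * ε) / (μ ^ 2 * (1 - μ + ε)) := by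
      field_simp
    rw [h2, le_div_iff₀ (by positivity), one_mul]
    nlinarith [mul_nonneg (mul_nonneg hμ0.le hε.le) h1μ.le,
      mul_nonneg (by linarith : (0:ℝ) ≤ μ - 2 * ε)
        (by nlinarith : (0:ℝ) ≤ 2 * μ * (1 - μ) + 2 * ε)]
end

section
/- For μ, μ' ∈ (0,1) with Δ = |μ' − μ|, the binary KL divergence satisfies kl(μ, μ') ≥ (1/2) · max( Δ²/(μ(1-μ)+Δ), Δ²/(μ'(1-μ')+Δ) ). -/
/-!
The function `klBin p` vanishes at `p` and has derivative `(x - p) / (x * (1 - x))`, so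
`klBin p q = ∫ x in p..q, (x - p) / (x * (1 - x))`. If `x * (1 - x) ≤ c` between `p` and `q`,
comparing with `∫ x in p..q, (x - p) / c` gives `klBin p q ≥ (q - p) ^ 2 / (2 * c)`. Since
`x ↦ x * (1 - x)` is `1`-Lipschitz on `[0, 1]`, any `a` between `p` and `q` provides
`c = a * (1 - a) + |q - p|`; take `a = p` and `a = q`.
-/
/-- Binary Kullback-Leibler divergence between `Bernoulli(p)` and `Bernoulli(q)`. -/
noncomputable def klBin (p q : ℝ) : ℝ :=
  p * Real.log (p / q) + (1 - p) * Real.log ((1 - p) / (1 - q))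

open Real Set

lemma mul_log_div_of_ne_zero (a : ℝ) {q : ℝ} (hq : q ≠ 0) :
    a * log (a / q) = a * (log a - log q) := by
  rcases eq_or_ne a 0 with rfl | ha
  · simp
  · rw [log_div ha hq]

lemma klBin_self (p : ℝ) : klBin p p = 0 := by
  by_cases hp : p = 0
  · simp [klBin, hp]
  by_cases hp' : 1 - p = 0
  · simp [klBin, hp']
  simp [klBin, div_self hp, div_self hp']

lemma klBin_one_sub (p q : ℝ) : klBin (1 - p) (1 - q) = klBin p q := by
  simp only [klBin, sub_sub_cancel]
  ring

lemma hasDerivAt_klBin_right (p : ℝ) {q : ℝ} (hq₀ : q ≠ 0) (hq₁ : q ≠ 1) :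
    HasDerivAt (klBin p) ((q - p) / (q * (1 - q))) q := by
  have hsplit : (fun x => p * (log p - log x) + (1 - p) * (log (1 - p) - log (1 - x)))
      =ᶠ[nhds q] klBin p := by
    filter_upwards [isOpen_ne.mem_nhds hq₀, isOpen_ne.mem_nhds hq₁] with x hx₀ hx₁
    rw [klBin, mul_log_div_of_ne_zero _ hx₀,
      mul_log_div_of_ne_zero _ (sub_ne_zero.mpr (Ne.symm hx₁))]
  have hlog₁ : HasDerivAt (fun x => log (1 - x)) (-1 / (1 - q)) q := by
    simpa using ((hasDerivAt_id q).const_sub 1).log (sub_ne_zero.mpr hq₁.symm)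
  refine (((((hasDerivAt_log hq₀).const_sub _).const_mul p).add
    ((hlog₁.const_sub _).const_mul (1 - p))).congr_of_eventuallyEq hsplit.symm).congr_deriv ?_
  field_simp
  ring

lemma continuousOn_sub_div_mul_one_sub (p : ℝ) :
    ContinuousOn (fun x => (x - p) / (x * (1 - x))) (Ioo 0 1) :=
  ContinuousOn.div (by fun_prop) (by fun_prop) fun x hx =>
    (mul_pos hx.1 (sub_pos.mpr hx.2)).ne'

lemma klBin_eq_integral {p q : ℝ} (hp : p ∈ Ioo (0 : ℝ) 1) (hq : q ∈ Ioo (0 : ℝ) 1) :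
    klBin p q = ∫ x in p..q, (x - p) / (x * (1 - x)) := by
  have hsub : uIcc p q ⊆ Ioo 0 1 := ordConnected_Ioo.uIcc_subset hp hq
  rw [intervalIntegral.integral_eq_sub_of_hasDerivAt
    (fun x hx => hasDerivAt_klBin_right p (hsub hx).1.ne' (hsub hx).2.ne)
    ((continuousOn_sub_div_mul_one_sub p).mono hsub).intervalIntegrable, klBin_self, sub_zero]

lemma integral_sub_div (p q c : ℝ) : ∫ x in p..q, (x - p) / c = (q - p) ^ 2 / (2 * c) := by
  rw [intervalIntegral.integral_div, intervalIntegral.integral_comp_sub_right (fun x => x),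
    integral_id]
  field_simp
  ring

lemma sq_div_le_klBin_of_le {p q c : ℝ} (hp : p ∈ Ioo (0 : ℝ) 1) (hq : q ∈ Ioo (0 : ℝ) 1)
    (hpq : p ≤ q) (hbd : ∀ x ∈ Icc p q, x * (1 - x) ≤ c) :
    (q - p) ^ 2 / (2 * c) ≤ klBin p q := by
  have hsub : Icc p q ⊆ Ioo 0 1 := ordConnected_Ioo.out hp hq
  rw [klBin_eq_integral hp hq, ← integral_sub_div]
  refine intervalIntegral.integral_mono_on hpq (by apply Continuous.intervalIntegrable; fun_prop)
    ((continuousOn_sub_div_mul_one_sub p).mono (uIcc_of_le hpq ▸ hsub)).intervalIntegrable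
    fun x hx => ?_
  exact div_le_div_of_nonneg_left (sub_nonneg.mpr hx.1)
    (mul_pos (hsub hx).1 (sub_pos.mpr (hsub hx).2)) (hbd x hx)

lemma sq_div_le_klBin {p q c : ℝ} (hp : p ∈ Ioo (0 : ℝ) 1) (hq : q ∈ Ioo (0 : ℝ) 1)
    (hbd : ∀ x ∈ uIcc p q, x * (1 - x) ≤ c) :
    (q - p) ^ 2 / (2 * c) ≤ klBin p q := by
  rcases le_total p q with hpq | hqp
  · exact sq_div_le_klBin_of_le hp hq hpq fun x hx => hbd x (Icc_subset_uIcc hx)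
  -- the reflection `x ↦ 1 - x` preserves both `klBin` and `x * (1 - x)`
  · have hreflect : ∀ {x : ℝ}, x ∈ Ioo (0 : ℝ) 1 → 1 - x ∈ Ioo (0 : ℝ) 1 := fun hx =>
      ⟨sub_pos.mpr hx.2, sub_lt_self 1 hx.1⟩
    rw [← klBin_one_sub, show (q - p) ^ 2 = ((1 - q) - (1 - p)) ^ 2 by ring]
    refine sq_div_le_klBin_of_le (hreflect hp) (hreflect hq) (by linarith) fun x hx => ?_
    have hx' : 1 - x ∈ uIcc p q := Icc_subset_uIcc' ⟨by linarith [hx.2], by linarith [hx.1]⟩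
    simpa [mul_comm] using hbd (1 - x) hx'

lemma lipschitzOnWith_mul_one_sub : LipschitzOnWith 1 (fun x : ℝ => x * (1 - x)) (Icc 0 1) := by
  refine LipschitzOnWith.of_le_add fun x hx y hy => ?_
  have hfactor : x * (1 - x) - y * (1 - y) = (x - y) * (1 - x - y) := by ring
  have hbound : |1 - x - y| ≤ 1 := abs_le.mpr ⟨by linarith [hx.2, hy.2], by linarith [hx.1, hy.1]⟩
  rw [Real.dist_eq, ← sub_le_iff_le_add', hfactor]
  calc (x - y) * (1 - x - y) ≤ |x - y| * |1 - x - y| := by rw [← abs_mul]; exact le_abs_self _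
    _ ≤ |x - y| := mul_le_of_le_one_right (abs_nonneg _) hbound

lemma half_sq_div_le_klBin {p q a : ℝ} (hp : p ∈ Ioo (0 : ℝ) 1) (hq : q ∈ Ioo (0 : ℝ) 1)
    (ha : a ∈ uIcc p q) :
    1 / 2 * (|q - p| ^ 2 / (a * (1 - a) + |q - p|)) ≤ klBin p q := by
  have hsub : uIcc p q ⊆ Icc 0 1 := (ordConnected_Ioo.uIcc_subset hp hq).trans Ioo_subset_Icc_self
  have hbd : ∀ x ∈ uIcc p q, x * (1 - x) ≤ a * (1 - a) + |q - p| := fun x hx => by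
    have := lipschitzOnWith_mul_one_sub.le_add_mul (hsub hx) (hsub ha)
    rw [NNReal.coe_one, one_mul, Real.dist_eq] at this
    linarith [abs_sub_le_of_uIcc_subset_uIcc (uIcc_subset_uIcc ha hx)]
  calc 1 / 2 * (|q - p| ^ 2 / (a * (1 - a) + |q - p|))
      = (q - p) ^ 2 / (2 * (a * (1 - a) + |q - p|)) := by rw [sq_abs]; field_simp
    _ ≤ klBin p q := sq_div_le_klBin hp hq hbd

/-- Refined Pinsker-type lower bound for the binary KL divergence. -/
theorem klBin_lower_bound (μ μ' : ℝ) (hμ : μ ∈ Set.Ioo (0:ℝ) 1)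
    (hμ' : μ' ∈ Set.Ioo (0:ℝ) 1) :
    klBin μ μ' ≥ (1/2) *
      max (|μ' - μ| ^ 2 / (μ * (1 - μ) + |μ' - μ|))
          (|μ' - μ| ^ 2 / (μ' * (1 - μ') + |μ' - μ|)) := by
  rw [ge_iff_le, mul_max_of_nonneg _ _ (by norm_num)]
  exact max_le (half_sq_div_le_klBin hμ hμ' left_mem_uIcc)
    (half_sq_div_le_klBin hμ hμ' right_mem_uIcc)
end
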